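/- arXiv:2503.07034 — 2 statements merged into one kernel-verified Lean document; each statement's English description precedes it below -/
import Mathlib

section
/- Assume in addition that S⁰ is pure-jump, i.e. for every r ≥ 0, S⁰(r) equals the sum over 0 < s ≤ r of its jumps S⁰(s) − S⁰(s⁻). Then for Lebesgue-almost every t > 0, L is differentiable at t and its derivative equals L′(t) = (1/κ)·1_{{S(L(t)) = t}}; in other words, dL(t)/dt = κ⁻¹ on the set where the overshoot R(t) = S(L(t)) − t vanishes, and dL(t)/dt = 0 where R(t) > 0. -/
/-!
Let `G` be the union of the gaps `[S(r-), S(r))`, `r > 0`, that the jumps of `S` leave in its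
range. The overshoot at `t > 0` vanishes exactly when `t ∉ G`. Below the level `S(l)` the gaps
have total length equal to the sum of the jumps of `S` up to time `l`, which is `S⁰(l)` because
`S⁰` is pure-jump; since `(t, S(L t))` lies in a single gap, this gives
`κ L(t) = |(0, t] \ G|`, i.e. `L(t) = ∫₀ᵗ κ⁻¹ 1_{Gᶜ}`. The Lebesgue differentiation theorem
then yields `L' = κ⁻¹ 1_{Gᶜ}` almost everywhere.
-/

open Set MeasureTheory Filter Topology Function

def jumpGaps (T : ℝ → ℝ) (s : Set ℝ) : Set ℝ :=
  ⋃ r ∈ s, Ico (leftLim T r) (T r)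

variable {T : ℝ → ℝ} {t r l : ℝ}

theorem Monotone.countable_support_jump (hT : Monotone T) :
    (support fun r => T r - leftLim T r).Countable :=
  hT.countable_not_continuousAt.mono fun r (hr : T r - leftLim T r ≠ 0)
    (hc : ContinuousAt T r) => hr (sub_eq_zero.2 hc.continuousWithinAt.leftLim_eq.symm)

theorem jumpGaps_inter_support_jump (s : Set ℝ) :
    jumpGaps T (s ∩ support fun r => T r - leftLim T r) = jumpGaps T s := by
  refine (biUnion_mono inter_subset_left fun _ _ => subset_rfl).antisymm ?_
  refine iUnion₂_subset fun r hr x hx => mem_biUnion ⟨hr, ?_⟩ hx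
  exact sub_ne_zero.2 (hx.1.trans_lt hx.2).ne'

theorem Monotone.measurableSet_jumpGaps (hT : Monotone T) (s : Set ℝ) :
    MeasurableSet (jumpGaps T s) := by
  rw [← jumpGaps_inter_support_jump]
  exact .biUnion (hT.countable_support_jump.mono inter_subset_right) fun _ _ => measurableSet_Ico

theorem Monotone.pairwise_disjoint_Ico_leftLim (hT : Monotone T) :
    Pairwise (Disjoint on fun r => Ico (leftLim T r) (T r)) := by
  refine (pairwise_disjoint_on _).2 fun a b hab => disjoint_left.2 fun x hxa hxb => ?_
  exact (hxa.2.trans_le (hT.le_leftLim hab)).not_ge hxb.1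

theorem Monotone.measureReal_jumpGaps (hT : Monotone T) (s : Set ℝ) :
    volume.real (jumpGaps T s) = ∑' r : s, (T r - leftLim T r) := by
  set D := s ∩ support fun r => T r - leftLim T r
  have hjump : ∀ r, 0 ≤ T r - leftLim T r := fun r => sub_nonneg.2 (hT.leftLim_le le_rfl)
  calc volume.real (jumpGaps T s)
      = (∑' r : D, ENNReal.ofReal (T r - leftLim T r)).toReal := by
        rw [← jumpGaps_inter_support_jump, measureReal_def, jumpGaps,
          measure_biUnion (hT.countable_support_jump.mono inter_subset_right)
            (hT.pairwise_disjoint_Ico_leftLim.set_pairwise _) fun _ _ => measurableSet_Ico]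
        simp only [Real.volume_Ico]
        rfl
    _ = ∑' r : D, (T r - leftLim T r) := by
        rw [ENNReal.tsum_toReal_eq fun _ => ENNReal.ofReal_ne_top]
        simp only [ENNReal.toReal_ofReal (hjump _)]
    _ = ∑' r : s, (T r - leftLim T r) := by
        rw [tsum_subtype D (fun r => T r - leftLim T r),
          tsum_subtype s (fun r => T r - leftLim T r), indicator_inter_support]

noncomputable def firstPassage (T : ℝ → ℝ) (t : ℝ) : ℝ :=
  sInf {r | 0 < r ∧ t < T r}

theorem firstPassage_le (hr : 0 < r) (h : t < T r) : firstPassage T t ≤ r :=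
  csInf_le ⟨0, fun _ hq => hq.1.le⟩ ⟨hr, h⟩

theorem apply_le_of_lt_firstPassage (hr : 0 < r) (h : r < firstPassage T t) : T r ≤ t :=
  not_lt.1 fun h' => (firstPassage_le hr h').not_gt h

theorem leftLim_apply_firstPassage_le (hT : Monotone T) (hpos : 0 < firstPassage T t) :
    leftLim T (firstPassage T t) ≤ t :=
  le_of_tendsto (hT.tendsto_leftLim _) <| mem_of_superset (Ioo_mem_nhdsLT hpos)
    fun _ hr => apply_le_of_lt_firstPassage hr.1 hr.2

theorem firstPassage_eq_of_mem_Ico (hT : Monotone T) (hr : 0 < r)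
    (hs : t ∈ Ico (leftLim T r) (T r)) : firstPassage T t = r :=
  (firstPassage_le hr hs.2).antisymm <| le_csInf ⟨r, hr, hs.2⟩ fun _ hq =>
    not_lt.1 fun hqr => ((hT.le_leftLim hqr).trans hs.1).not_gt hq.2

section

variable (hne : ∃ r, 0 < r ∧ t < T r)
include hne

theorem firstPassage_nonneg : 0 ≤ firstPassage T t :=
  le_csInf hne fun _ hq => hq.1.le

theorem lt_apply_of_firstPassage_lt (hT : Monotone T) (h : firstPassage T t < r) : t < T r := by
  obtain ⟨q, hq, hqr⟩ := exists_lt_of_csInf_lt hne h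
  exact hq.2.trans_le (hT hqr.le)

theorem le_apply_firstPassage (hT : Monotone T)
    (hrc : ContinuousWithinAt T (Ici (firstPassage T t)) (firstPassage T t)) :
    t ≤ T (firstPassage T t) :=
  ge_of_tendsto (hrc.mono_left (nhdsWithin_mono _ Ioi_subset_Ici_self))
    (eventually_nhdsWithin_of_forall fun _ hr => (lt_apply_of_firstPassage_lt hne hT hr).le)

theorem firstPassage_pos (hT : Monotone T) (hrc : ContinuousWithinAt T (Ici 0) 0)
    (ht : T 0 < t) : 0 < firstPassage T t := by
  obtain ⟨r, hrt, hr⟩ := ((hrc.mono_left (nhdsWithin_mono _ Ioi_subset_Ici_self)).eventually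
    (gt_mem_nhds ht)).and self_mem_nhdsWithin |>.exists
  exact hr.trans_le <| le_csInf hne fun q hq =>
    not_lt.1 fun hqr => (hT hqr.le).not_gt (hrt.trans hq.2)

theorem mem_jumpGaps_Ioi_iff (hT : Monotone T)
    (hrc : ∀ r, 0 ≤ r → ContinuousWithinAt T (Ici r) r) (ht : T 0 < t) :
    t ∈ jumpGaps T (Ioi 0) ↔ T (firstPassage T t) ≠ t := by
  constructor
  · rintro ⟨_, ⟨r, rfl⟩, _, ⟨hr, rfl⟩, hmem⟩
    rw [firstPassage_eq_of_mem_Ico hT hr hmem]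
    exact hmem.2.ne'
  · intro hR
    have hpos := firstPassage_pos hne hT (hrc 0 le_rfl) ht
    refine mem_biUnion hpos ⟨leftLim_apply_firstPassage_le hT hpos, ?_⟩
    exact (le_apply_firstPassage hne hT (hrc _ hpos.le)).lt_of_ne' hR

end

theorem StrictMono.Ioc_inter_jumpGaps_Ioi (hT : StrictMono T) (l : ℝ) :
    Ioc (T 0) (T l) ∩ jumpGaps T (Ioi 0) = jumpGaps T (Ioc 0 l) := by
  ext x
  simp only [jumpGaps, mem_inter_iff, mem_iUnion₂, mem_Ioc, mem_Ioi, exists_prop]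
  constructor
  · rintro ⟨⟨-, hxl⟩, r, hr, hx⟩
    refine ⟨r, ⟨hr, not_lt.1 fun hlr => ?_⟩, hx⟩
    obtain ⟨m, hlm, hmr⟩ := exists_between hlr
    exact (hxl.trans_lt ((hT hlm).trans_le ((hT.monotone.le_leftLim hmr).trans hx.1))).false
  · rintro ⟨r, ⟨hr, hrl⟩, hx⟩
    refine ⟨⟨?_, hx.2.le.trans (hT.monotone hrl)⟩, r, hr, hx⟩
    obtain ⟨m, h0m, hmr⟩ := exists_between hr
    exact (hT h0m).trans_le ((hT.monotone.le_leftLim hmr).trans hx.1)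

theorem measureReal_Ioc_sdiff_jumpGaps_Ioi (hT : StrictMono T)
    (hrc : ∀ r, 0 ≤ r → ContinuousWithinAt T (Ici r) r) (hne : ∃ r, 0 < r ∧ t < T r)
    (ht : T 0 < t) :
    volume.real (Ioc (T 0) t \ jumpGaps T (Ioi 0)) =
      T (firstPassage T t) - T 0 - ∑' r : Ioc 0 (firstPassage T t), (T r - leftLim T r) := by
  set l := firstPassage T t
  set G := jumpGaps T (Ioi 0)
  have hpos : 0 < l := firstPassage_pos hne hT.monotone (hrc 0 le_rfl) ht
  have hfin : volume (Ioc (T 0) (T l) \ G) ≠ ⊤ :=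
    ((measure_mono sdiff_subset).trans_lt measure_Ioc_lt_top).ne
  have hrange : volume.real (Ioc (T 0) (T l) \ G) =
      T l - T 0 - ∑' r : Ioc 0 l, (T r - leftLim T r) := by
    have := measureReal_sdiff_add_inter (μ := volume) (s := Ioc (T 0) (T l))
      (hT.monotone.measurableSet_jumpGaps (Ioi 0)) measure_Ioc_lt_top.ne
    rw [hT.Ioc_inter_jumpGaps_Ioi, hT.monotone.measureReal_jumpGaps,
      Real.volume_real_Ioc_of_le (hT.monotone hpos.le)] at this
    linarith
  have hsub : Ioc (T 0) t \ G ⊆ Ioc (T 0) (T l) \ G := sdiff_subset_sdiff_left <|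
    Ioc_subset_Ioc_right (le_apply_firstPassage hne hT.monotone (hrc l hpos.le))
  -- `(t, T l)` lies in the gap `[leftLim T l, T l)`.
  have hsup : Ioo (T 0) (T l) \ G ⊆ Ioc (T 0) t \ G := fun x ⟨⟨h0, hxl⟩, hxG⟩ =>
    ⟨⟨h0, not_lt.1 fun htx => hxG <|
      mem_biUnion hpos ⟨(leftLim_apply_firstPassage_le hT.monotone hpos).trans htx.le, hxl⟩⟩, hxG⟩
  refine le_antisymm ((measureReal_mono hsub hfin).trans hrange.le) ?_
  rw [← hrange]
  exact (measureReal_congr (Ioo_ae_eq_Ioc.diff EventuallyEq.rfl)).ge.trans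
    (measureReal_mono hsup ((measure_mono hsub).trans_lt hfin.lt_top).ne)

theorem firstPassage_eq_integral_indicator (hT : StrictMono T)
    (hrc : ∀ r, 0 ≤ r → ContinuousWithinAt T (Ici r) r) (hne : ∃ r, 0 < r ∧ t < T r)
    {κ : ℝ} (hκ : κ ≠ 0)
    (hpj : ∀ l, 0 < l → T l - T 0 = κ * l + ∑' r : Ioc 0 l, (T r - leftLim T r))
    (ht : T 0 < t) :
    firstPassage T t = ∫ x in T 0..t, (jumpGaps T (Ioi 0))ᶜ.indicator (fun _ => κ⁻¹) x := by
  have hG := hT.monotone.measurableSet_jumpGaps (Ioi 0)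
  rw [intervalIntegral.integral_of_le ht.le, integral_indicator_const _ hG.compl,
    measureReal_restrict_apply hG.compl, inter_comm, ← sdiff_eq,
    measureReal_Ioc_sdiff_jumpGaps_Ioi hT hrc hne ht,
    hpj _ (firstPassage_pos hne hT.monotone (hrc 0 le_rfl) ht), add_sub_cancel_right,
    smul_eq_mul, mul_comm, inv_mul_cancel_left₀ hκ]

theorem ae_hasDerivAt_firstPassage (hT : StrictMono T)
    (hrc : ∀ r, 0 ≤ r → ContinuousWithinAt T (Ici r) r) (hne : ∀ t, ∃ r, 0 < r ∧ t < T r)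
    {κ : ℝ} (hκ : κ ≠ 0)
    (hpj : ∀ l, 0 < l → T l - T 0 = κ * l + ∑' r : Ioc 0 l, (T r - leftLim T r)) :
    ∀ᵐ t ∂volume.restrict (Ioi (T 0)),
      HasDerivAt (firstPassage T) (if T (firstPassage T t) = t then κ⁻¹ else 0) t := by
  set f := (jumpGaps T (Ioi 0))ᶜ.indicator fun _ => κ⁻¹
  have hf : LocallyIntegrable f :=
    (locallyIntegrable_const _).indicator (hT.monotone.measurableSet_jumpGaps _).compl
  filter_upwards [ae_restrict_of_ae (LocallyIntegrable.ae_hasDerivAt_integral hf),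
    self_mem_ae_restrict measurableSet_Ioi] with t hderiv ht
  have hL : firstPassage T =ᶠ[𝓝 t] fun u => ∫ x in T 0..u, f x :=
    eventually_of_mem (Ioi_mem_nhds ht) fun u hu =>
      firstPassage_eq_integral_indicator hT hrc (hne u) hκ hpj hu
  have hval : f t = if T (firstPassage T t) = t then κ⁻¹ else 0 := by
    simp [f, indicator, mem_jumpGaps_Ioi_iff (hne t) hT.monotone hrc ht]
  exact hval ▸ (hderiv (T 0)).congr_of_eventuallyEq hL

theorem MonotoneOn.comp_max_Ici {f : ℝ → ℝ} {a : ℝ} (hf : MonotoneOn f (Ici a)) :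
    Monotone fun r => f (max r a) :=
  fun _ _ hxy => hf (mem_Ici.2 (le_max_right _ _)) (mem_Ici.2 (le_max_right _ _))
    (max_le_max_right a hxy)

def subordinatorPath (κ : ℝ) (S0 : ℝ → ℝ) (r : ℝ) : ℝ :=
  κ * r + S0 (max r 0)

section subordinatorPath

variable {κ : ℝ} {S0 : ℝ → ℝ}

theorem subordinatorPath_of_nonneg (hr : 0 ≤ r) : subordinatorPath κ S0 r = κ * r + S0 r := by
  rw [subordinatorPath, max_eq_left hr]

theorem subordinatorPath_zero (h0 : S0 0 = 0) : subordinatorPath κ S0 0 = 0 := by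
  simp [subordinatorPath, h0]

theorem strictMono_subordinatorPath (hκ : 0 < κ) (hmono : MonotoneOn S0 (Ici 0)) :
    StrictMono (subordinatorPath κ S0) :=
  (strictMono_mul_left_of_pos hκ).add_monotone hmono.comp_max_Ici

theorem continuousWithinAt_subordinatorPath (hr : 0 ≤ r)
    (hrc : ContinuousWithinAt S0 (Ici r) r) :
    ContinuousWithinAt (subordinatorPath κ S0) (Ici r) r :=
  (continuous_const_mul κ).continuousWithinAt.add <|
    hrc.congr (fun _ hx => congrArg S0 (max_eq_left (hr.trans hx))) (congrArg S0 (max_eq_left hr))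

theorem exists_lt_subordinatorPath (hκ : 0 < κ) (hmono : MonotoneOn S0 (Ici 0)) (h0 : S0 0 = 0)
    (t : ℝ) : ∃ r, 0 < r ∧ t < subordinatorPath κ S0 r := by
  have hr : 0 < |t| / κ + 1 := by positivity
  refine ⟨|t| / κ + 1, hr, ?_⟩
  have hS0 : 0 ≤ S0 (|t| / κ + 1) := h0 ▸ hmono self_mem_Ici hr.le hr.le
  rw [subordinatorPath_of_nonneg hr.le, mul_add, mul_div_cancel₀ _ hκ.ne']
  linarith [le_abs_self t]

theorem leftLim_subordinatorPath (hmono : MonotoneOn S0 (Ici 0)) (hr : 0 < r) :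
    leftLim (subordinatorPath κ S0) r = κ * r + leftLim S0 r := by
  have hlim := hmono.comp_max_Ici.tendsto_leftLim r
  have hS0 : leftLim S0 r = leftLim (fun x => S0 (max x 0)) r :=
    leftLim_eq_of_tendsto <| hlim.congr' <| mem_of_superset (Ioo_mem_nhdsLT hr)
      fun x hx => congrArg S0 (max_eq_left hx.1.le)
  rw [hS0]
  exact leftLim_eq_of_tendsto <|
    ((continuous_const_mul κ).tendsto r).mono_left nhdsWithin_le_nhds |>.add hlim

theorem subordinatorPath_sub_eq_add_tsum_jump (hmono : MonotoneOn S0 (Ici 0)) (h0 : S0 0 = 0)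
    (hpj : ∀ r ∈ Ici (0 : ℝ), S0 r = ∑' s : Ioc (0 : ℝ) r, (S0 s - leftLim S0 s))
    (hl : 0 < l) :
    subordinatorPath κ S0 l - subordinatorPath κ S0 0 =
      κ * l + ∑' r : Ioc 0 l, (subordinatorPath κ S0 r - leftLim (subordinatorPath κ S0) r) := by
  rw [subordinatorPath_zero h0, sub_zero, subordinatorPath_of_nonneg hl.le, hpj l hl.le]
  congr 1
  refine tsum_congr fun r => ?_
  rw [subordinatorPath_of_nonneg r.2.1.le, leftLim_subordinatorPath hmono r.2.1]
  ring

end subordinatorPath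

theorem inverse_subordinator_ae_deriv_indicator_general
    (κ : ℝ) (hκ : 0 < κ)
    (S0 : ℝ → ℝ)
    (hS0_mono : MonotoneOn S0 (Ici 0))
    (hS0_rc : ∀ r ∈ Ici (0 : ℝ), ContinuousWithinAt S0 (Ici r) r)
    (hS0_zero : S0 0 = 0)
    (hS0_pure_jump : ∀ r ∈ Ici (0 : ℝ),
      S0 r = ∑' s : (Ioc (0 : ℝ) r), (S0 s - Function.leftLim S0 s))
    (S : ℝ → ℝ) (hS : ∀ r, S r = κ * r + S0 r)
    (L : ℝ → ℝ) (hL : ∀ t, L t = sInf {r : ℝ | 0 < r ∧ t < S r}) :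
    ∀ᵐ t ∂(volume.restrict (Ioi (0 : ℝ))),
      HasDerivAt L (if S (L t) = t then 1 / κ else 0) t := by
  set T := subordinatorPath κ S0
  have hne := exists_lt_subordinatorPath hκ hS0_mono hS0_zero
  have hST : ∀ r, 0 ≤ r → S r = T r := fun r hr => by
    rw [hS, ← subordinatorPath_of_nonneg hr]
  obtain rfl : L = firstPassage T := funext fun t => by
    rw [hL, firstPassage]
    congr 1
    ext r
    exact and_congr_right fun hr => by rw [hST r hr.le]
  have hderiv := ae_hasDerivAt_firstPassage (strictMono_subordinatorPath hκ hS0_mono)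
    (fun r hr => continuousWithinAt_subordinatorPath hr (hS0_rc r hr)) hne hκ.ne'
    (fun l hl => subordinatorPath_sub_eq_add_tsum_jump hS0_mono hS0_zero hS0_pure_jump hl)
  rw [subordinatorPath_zero hS0_zero] at hderiv
  filter_upwards [hderiv] with t ht
  rwa [hST _ (firstPassage_nonneg (hne t)), one_div]

/-- If `S⁰` is pure-jump, then for Lebesgue-a.e. `t > 0`, `L` is differentiable at `t`
with derivative `(1/κ) • 1_{S (L t) = t}`: the derivative equals `κ⁻¹` where the
overshoot `R t = S (L t) - t` vanishes, and `0` where `R t > 0`. -/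
theorem inverse_subordinator_ae_deriv_indicator
    (κ : ℝ) (hκ : 0 < κ)
    (S0 : ℝ → ℝ)
    (hS0_mono : MonotoneOn S0 (Ici 0))
    (hS0_rc : ∀ r ∈ Ici (0 : ℝ), ContinuousWithinAt S0 (Ici r) r)
    (hS0_zero : S0 0 = 0)
    (hS0_nonneg : ∀ r ∈ Ici (0 : ℝ), 0 ≤ S0 r)
    (hS0_pure_jump : ∀ r ∈ Ici (0 : ℝ),
      S0 r = ∑' s : (Ioc (0 : ℝ) r), (S0 s - Function.leftLim S0 s))
    (S : ℝ → ℝ) (hS : ∀ r, S r = κ * r + S0 r)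
    (L : ℝ → ℝ) (hL : ∀ t, L t = sInf {r : ℝ | 0 < r ∧ t < S r}) :
    ∀ᵐ t ∂(volume.restrict (Ioi (0 : ℝ))),
      HasDerivAt L (if S (L t) = t then 1 / κ else 0) t :=
  inverse_subordinator_ae_deriv_indicator_general κ hκ S0 hS0_mono hS0_rc hS0_zero hS0_pure_jump S
    hS L hL
end

section
/- If (fₙ) is a sequence of measurable functions from X to ℝ, each taking values in U, which is Cauchy with respect to the pseudometric d (i.e. d(fₙ, fₘ) → 0 as n, m → ∞), then there exists a measurable function f : X → ℝ taking values in U such that d(fₙ, f) → 0; that is, the set of U-valued measurable functions equipped with the pseudometric d is complete. -/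
/-!
Pass to a subsequence `F k := f (φ k)` whose consecutive disagreement sets `Eₖ` have measures
`< 2⁻ᵏ`. By Borel–Cantelli almost every point lies in only finitely many `Eₖ`, so `F k x` is
eventually constant; a measurable a.e. limit `g` therefore satisfies `{F k ≠ g} ⊆ ⋃_{j ≥ k} Eⱼ`
up to a null set, whose measure is a tail of a convergent series. The Cauchy property passes
the convergence from the subsequence to the whole sequence. As `F k x` is eventually constant,
the limit can be taken in the subtype `U` itself.
-/

open MeasureTheory Filter Topology ENNReal TopologicalSpace

section Disagreement

variable {X β : Type*} [MeasurableSpace X] {μ : Measure X}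

theorem measure_ne_le_add (f g h : X → β) :
    μ {x | f x ≠ h x} ≤ μ {x | f x ≠ g x} + μ {x | g x ≠ h x} := by
  refine (measure_mono fun x (hx : f x ≠ h x) => ?_).trans (measure_union_le _ _)
  by_contra hx'
  simp only [Set.mem_union, Set.mem_ofPred_eq, not_or, not_not] at hx'
  exact hx (hx'.1.trans hx'.2)

theorem eq_of_forall_ge_succ_eq {u : ℕ → β} {k : ℕ} (h : ∀ j ≥ k, u (j + 1) = u j) :
    ∀ j ≥ k, u j = u k := by
  intro j hj
  induction j, hj using Nat.le_induction with
  | base => rfl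
  | succ j hkj ih => rw [h j hkj, ih]

theorem ae_exists_tendsto_of_tsum_measure_ne_ne_top [TopologicalSpace β] {F : ℕ → X → β}
    (h : ∑' j, μ {x | F j x ≠ F (j + 1) x} ≠ ∞) :
    ∀ᵐ x ∂μ, ∃ l, Tendsto (fun n => F n x) atTop (𝓝 l) := by
  filter_upwards [ae_eventually_notMem h] with x hx
  obtain ⟨k, hk⟩ := eventually_atTop.1 hx
  have hconst := eq_of_forall_ge_succ_eq (u := fun n => F n x) fun j hj =>
    (not_not.1 (hk j hj)).symm
  exact ⟨F k x, tendsto_atTop_of_eventually_const hconst⟩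

theorem measure_ne_le_tsum_of_ae_tendsto [TopologicalSpace β] [T2Space β] {F : ℕ → X → β}
    {g : X → β} (hg : ∀ᵐ x ∂μ, Tendsto (fun n => F n x) atTop (𝓝 (g x))) (k : ℕ) :
    μ {x | F k x ≠ g x} ≤ ∑' j, μ {x | F (j + k) x ≠ F (j + k + 1) x} := by
  refine (measure_mono_ae ?_).trans (measure_iUnion_le _)
  filter_upwards [hg] with x hx (hne : F k x ≠ g x)
  show x ∈ ⋃ j, _
  by_contra! hx'
  simp only [Set.mem_iUnion, not_exists] at hx'
  have hconst := eq_of_forall_ge_succ_eq (u := fun n => F n x) (k := k) fun j hj => by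
    simpa [Nat.sub_add_cancel hj] using (not_not.1 (hx' (j - k))).symm
  exact hne (tendsto_nhds_unique (tendsto_atTop_of_eventually_const hconst) hx)

theorem exists_measurable_tendsto_measure_ne_of_tsum_ne_top [TopologicalSpace β]
    [MetrizableSpace β] [MeasurableSpace β] [BorelSpace β] {F : ℕ → X → β}
    (hF : ∀ n, AEMeasurable (F n) μ) (h : ∑' j, μ {x | F j x ≠ F (j + 1) x} ≠ ∞) :
    ∃ g, Measurable g ∧ Tendsto (fun n => μ {x | F n x ≠ g x}) atTop (𝓝 0) := by
  obtain ⟨g, hg, hlim⟩ :=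
    measurable_limit_of_tendsto_metrizable_ae hF (ae_exists_tendsto_of_tsum_measure_ne_ne_top h)
  exact ⟨g, hg, tendsto_of_tendsto_of_tendsto_of_le_of_le tendsto_const_nhds
    (ENNReal.tendsto_sum_nat_add _ h) (fun _ => zero_le)
    (measure_ne_le_tsum_of_ae_tendsto hlim)⟩

theorem exists_strictMono_lt_of_cauchy {d : ℕ → ℕ → ℝ≥0∞}
    (hd : ∀ ε : ℝ≥0∞, 0 < ε → ∃ N : ℕ, ∀ m n : ℕ, N ≤ m → N ≤ n → d m n < ε)
    {ε : ℕ → ℝ≥0∞} (hε : ∀ k, 0 < ε k) :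
    ∃ φ : ℕ → ℕ, StrictMono φ ∧ ∀ k, d (φ k) (φ (k + 1)) < ε k := by
  obtain ⟨φ, hφ, hlt⟩ := extraction_forall_of_eventually' (P := fun k n => ∀ m ≥ n, d n m < ε k)
    fun k => (hd (ε k) (hε k)).imp fun N hN n hn m hm => hN n m hn (hn.trans hm)
  exact ⟨φ, hφ, fun k => hlt k _ (hφ k.lt_succ_self).le⟩

theorem tendsto_measure_ne_of_cauchy_of_subseq {F : ℕ → X → β} {g : X → β}
    (hcauchy : ∀ ε : ℝ≥0∞, 0 < ε → ∃ N : ℕ, ∀ m n : ℕ, N ≤ m → N ≤ n →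
      μ {x | F m x ≠ F n x} < ε)
    {φ : ℕ → ℕ} (hφ : StrictMono φ)
    (hsub : Tendsto (fun k => μ {x | F (φ k) x ≠ g x}) atTop (𝓝 0)) :
    Tendsto (fun n => μ {x | F n x ≠ g x}) atTop (𝓝 0) := by
  refine ENNReal.tendsto_atTop_zero.2 fun ε hε => ?_
  obtain ⟨N, hN⟩ := hcauchy (ε / 2) (ENNReal.half_pos hε.ne')
  obtain ⟨k, hkN, hk⟩ := ((hφ.tendsto_atTop.eventually_ge_atTop N).and
    (hsub.eventually (ge_mem_nhds (ENNReal.half_pos hε.ne')))).exists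
  refine ⟨N, fun n hn => ?_⟩
  calc μ {x | F n x ≠ g x}
      ≤ μ {x | F n x ≠ F (φ k) x} + μ {x | F (φ k) x ≠ g x} := measure_ne_le_add _ _ _
    _ ≤ ε / 2 + ε / 2 := add_le_add (hN n _ hn hkN).le hk
    _ = ε := ENNReal.add_halves ε

theorem exists_measurable_tendsto_measure_ne_of_cauchy [TopologicalSpace β]
    [MetrizableSpace β] [MeasurableSpace β] [BorelSpace β] {F : ℕ → X → β}
    (hF : ∀ n, AEMeasurable (F n) μ)
    (hcauchy : ∀ ε : ℝ≥0∞, 0 < ε → ∃ N : ℕ, ∀ m n : ℕ, N ≤ m → N ≤ n →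
      μ {x | F m x ≠ F n x} < ε) :
    ∃ g, Measurable g ∧ Tendsto (fun n => μ {x | F n x ≠ g x}) atTop (𝓝 0) := by
  obtain ⟨φ, hφ, hjump⟩ := exists_strictMono_lt_of_cauchy hcauchy (ε := fun k => 2⁻¹ ^ k)
    fun k => ENNReal.pow_pos (by simp) k
  have hsum : ∑' k, μ {x | F (φ k) x ≠ F (φ (k + 1)) x} ≠ ∞ :=
    ne_top_of_le_ne_top (by simp) <|
      (ENNReal.tsum_le_tsum fun k => (hjump k).le).trans_eq ENNReal.tsum_geometric_two
  obtain ⟨g, hg, hsub⟩ :=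
    exists_measurable_tendsto_measure_ne_of_tsum_ne_top (fun k => hF (φ k)) hsum
  exact ⟨g, hg, tendsto_measure_ne_of_cauchy_of_subseq hcauchy hφ hsub⟩

end Disagreement

theorem control_set_complete_general
    {X : Type*} [MeasurableSpace X] (μ : Measure X)
    (U : Set ℝ)
    (f : ℕ → X → ℝ)
    (hf_meas : ∀ n, Measurable (f n))
    (hf_U : ∀ n x, f n x ∈ U)
    (hcauchy : ∀ ε : ENNReal, 0 < ε → ∃ N : ℕ, ∀ m n : ℕ, N ≤ m → N ≤ n →
      μ {x | f m x ≠ f n x} < ε) :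
    ∃ g : X → ℝ, Measurable g ∧ (∀ x, g x ∈ U) ∧
      Tendsto (fun n => μ {x | f n x ≠ g x}) atTop (nhds 0) := by
  let F : ℕ → X → U := fun n x => ⟨f n x, hf_U n x⟩
  have hF_ne : ∀ m n, {x | F m x ≠ F n x} = {x | f m x ≠ f n x} := fun m n => by
    simp [F, Subtype.ext_iff]
  obtain ⟨g, hg, hlim⟩ := exists_measurable_tendsto_measure_ne_of_cauchy (μ := μ) (F := F)
    (fun n => (hf_meas n).subtype_mk.aemeasurable) (by simpa only [hF_ne] using hcauchy)
  refine ⟨fun x => (g x : ℝ), measurable_subtype_coe.comp hg, fun x => (g x).2, ?_⟩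
  simpa [F, Subtype.ext_iff] using hlim

/-- The set of `U`-valued measurable functions on a finite measure space, equipped
with the pseudometric `d(f, g) := μ {x | f x ≠ g x}`, is complete: every Cauchy
sequence converges to a measurable `U`-valued function in this pseudometric. -/
theorem control_set_complete
    {X : Type*} [MeasurableSpace X] (μ : Measure X) [IsFiniteMeasure μ]
    (U : Set ℝ) (hU_ne : U.Nonempty) (hU_closed : IsClosed U)
    (f : ℕ → X → ℝ)
    (hf_meas : ∀ n, Measurable (f n))
    (hf_U : ∀ n x, f n x ∈ U)
    (hcauchy : ∀ ε : ENNReal, 0 < ε → ∃ N : ℕ, ∀ m n : ℕ, N ≤ m → N ≤ n →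
      μ {x | f m x ≠ f n x} < ε) :
    ∃ g : X → ℝ, Measurable g ∧ (∀ x, g x ∈ U) ∧
      Tendsto (fun n => μ {x | f n x ≠ g x}) atTop (nhds 0) :=
  control_set_complete_general μ U f hf_meas hf_U hcauchy
end
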